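/- Let Y = (Y, ν, S) be an ergodic invertible ℤ-system on a standard Borel probability space, let α be a cocycle on Y, and let π : X_α → Y be the projection onto the first coordinate of the skew product X_α = (Y × I, ν × m, T_α). Suppose there exists a Følner sequence (F_n) for ℕ such that h_slow^{L,(F_n)}(X_α | π) = 0, where L(n) = log n. Then α is a rigid cocycle, i.e. X_α is a rigid extension of Y. -/

import Mathlib

open MeasureTheory Filter Set Topology
open scoped ENNReal Classical symmDiff

section NatSlowEntropyDefs

/-- A Følner sequence for the additive semigroup `ℕ`: a sequence of nonempty finite subsets
`F n ⊆ ℕ` with `|(g + Fₙ) ∩ Fₙ| / |Fₙ| → 1` for every `g ∈ ℕ`. -/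
def IsFolnerNat (F : ℕ → Finset ℕ) : Prop :=
  (∀ n, (F n).Nonempty) ∧ ∀ g : ℕ,
    Tendsto (fun n => ((((F n).image fun h => g + h) ∩ F n).card : ℝ) / ((F n).card : ℝ))
      atTop (nhds 1)

/-- A rate function: an increasing positive function on `ℕ` tending to infinity. -/
def IsRateFunction (U : ℕ → ℝ) : Prop :=
  (∀ n, 0 < U n) ∧ Monotone U ∧ Tendsto U atTop atTop

/-- The normalized Hamming distance `d_{P,F}` (for iterates of a single map `T`). -/
noncomputable def hamDistNat {X : Type*} (T : X → X) {r : ℕ} (P : X → Fin r)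
    (F : Finset ℕ) (x x' : X) : ℝ :=
  ((F.filter fun f => P (T^[f] x) ≠ P (T^[f] x')).card : ℝ) / (F.card : ℝ)

/-- The set `E` has `d_{P,F}`-diameter at most `ε`. -/
def diamLENat {X : Type*} (T : X → X) {r : ℕ} (P : X → Fin r) (F : Finset ℕ)
    (E : Set X) (ε : ℝ) : Prop :=
  ∀ x ∈ E, ∀ x' ∈ E, hamDistNat T P F x x' ≤ ε

/-- The Hamming `ε`-covering number `cov(λ, P, F, ε)`. -/
noncomputable def hamCovNat {X : Type*} [MeasurableSpace X] (T : X → X) (lam : Measure X)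
    {r : ℕ} (P : X → Fin r) (F : Finset ℕ) (ε : ℝ) : ℕ :=
  sInf {M : ℕ | ∃ E : Fin M → Set X, (∀ i, diamLENat T P F (E i) ε) ∧
    ENNReal.ofReal (1 - ε) ≤ lam (⋃ i, E i)}

/-- The relative Hamming `ε`-covering number `cov(μ, P, F, ε | π)`, defined through the
disintegration `μy` over a factor map and the factor measure `ν`. -/
noncomputable def hamCovRelNat {X Y : Type*} [MeasurableSpace X] [MeasurableSpace Y]
    (T : X → X) (μy : Y → Measure X) (ν : Measure Y) {r : ℕ} (P : X → Fin r)
    (F : Finset ℕ) (ε : ℝ) : ℕ :=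
  sInf {M : ℕ | ∃ S : Set Y, MeasurableSet S ∧ ENNReal.ofReal (1 - ε) ≤ ν S ∧
    ∀ y ∈ S, hamCovNat T (μy y) P F ε ≤ M}

/-- Slow entropy of a partition: `sup_{ε>0} limsup_n cov(μ, P, F_n, ε)/U(|F_n|)`. -/
noncomputable def slowEntropyPartNat {X : Type*} [MeasurableSpace X] (T : X → X)
    (μ : Measure X) {r : ℕ} (P : X → Fin r) (U : ℕ → ℝ) (F : ℕ → Finset ℕ) : ℝ≥0∞ :=
  ⨆ ε ∈ Ioi (0 : ℝ),
    Filter.limsup (fun n => ENNReal.ofReal ((hamCovNat T μ P (F n) ε : ℝ) / U (F n).card))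
      atTop

/-- Slow entropy: the supremum over all finite measurable partitions. -/
noncomputable def slowEntropyNat {X : Type*} [MeasurableSpace X] (T : X → X)
    (μ : Measure X) (U : ℕ → ℝ) (F : ℕ → Finset ℕ) : ℝ≥0∞ :=
  ⨆ (r : ℕ) (P : X → Fin r) (_ : Measurable P), slowEntropyPartNat T μ P U F

/-- Relative slow entropy of a partition. -/
noncomputable def slowEntropyPartRelNat {X Y : Type*} [MeasurableSpace X] [MeasurableSpace Y]
    (T : X → X) (μy : Y → Measure X) (ν : Measure Y) {r : ℕ} (P : X → Fin r)
    (U : ℕ → ℝ) (F : ℕ → Finset ℕ) : ℝ≥0∞ :=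
  ⨆ ε ∈ Ioi (0 : ℝ),
    Filter.limsup
      (fun n => ENNReal.ofReal ((hamCovRelNat T μy ν P (F n) ε : ℝ) / U (F n).card)) atTop

/-- Relative slow entropy: the supremum over all finite measurable partitions. -/
noncomputable def slowEntropyRelNat {X Y : Type*} [MeasurableSpace X] [MeasurableSpace Y]
    (T : X → X) (μy : Y → Measure X) (ν : Measure Y)
    (U : ℕ → ℝ) (F : ℕ → Finset ℕ) : ℝ≥0∞ :=
  ⨆ (r : ℕ) (P : X → Fin r) (_ : Measurable P), slowEntropyPartRelNat T μy ν P U F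

/-- The partition distance `dist_λ(P, Q) = λ{x : P(x) ≠ Q(x)}`. -/
noncomputable def partDist {Z : Type*} [MeasurableSpace Z] (lam : Measure Z)
    {ι : Type*} (P Q : Z → ι) : ℝ≥0∞ :=
  lam {z | P z ≠ Q z}

/-- A rigid measure-preserving system: there is a sequence `0 < n₁ < n₂ < ⋯` with
`μ(T^{-n_k} A ∆ A) → 0` for every measurable `A`. -/
def IsRigidSystem {X : Type*} [MeasurableSpace X] (T : X → X) (μ : Measure X) : Prop :=
  ∃ n : ℕ → ℕ, StrictMono n ∧ 0 < n 0 ∧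
    ∀ A : Set X, MeasurableSet A →
      Tendsto (fun k => μ ((T^[n k] ⁻¹' A) ∆ A)) atTop (nhds 0)

end NatSlowEntropyDefs

section AutIDefs

/-- The group of Lebesgue-measure-preserving (bi-measurable) automorphisms of the unit
interval; we work with genuine measure-preserving measurable bijections as representatives
of their a.e.-equality classes. -/
def AutI : Type :=
  {φ : unitInterval ≃ᵐ unitInterval // MeasurePreserving φ volume volume}

/-- The skew product map `T_α(y, t) = (S y, α(y) t)` of a cocycle `α : Y → Aut(I,m)`. -/
def skewMap {Y : Type*} (S : Y → Y) (α : Y → AutI) :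
    Y × unitInterval → Y × unitInterval :=
  fun p => (S p.1, (α p.1).1 p.2)

/-- The cocycle iterates `α_n(y) = α(S^{n-1} y) ∘ ⋯ ∘ α(S y) ∘ α(y)`, so that
`T_α^n (y,t) = (S^n y, α_n(y) t)`. -/
def cocIter {Y : Type*} (S : Y → Y) (α : Y → AutI) : ℕ → Y → unitInterval → unitInterval
  | 0, _, t => t
  | n + 1, y, t => cocIter S α n (S y) ((α y).1 t)

/-- Convergence to the identity in the weak topology of `Aut(I,m)`:
`m(φₖ⁻¹ E ∆ E) → 0` for every measurable `E ⊆ I`. -/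
def TendstoIdWeak (φ : ℕ → unitInterval → unitInterval) : Prop :=
  ∀ E : Set unitInterval, MeasurableSet E →
    Tendsto (fun k => (volume : Measure unitInterval) ((φ k ⁻¹' E) ∆ E)) atTop (nhds 0)

/-- A rigid cocycle: for `ν`-a.e. `y` there is a (`y`-dependent) strictly increasing
sequence `(n_k)` with `α_{n_k}(y) → id` weakly. -/
def IsRigidCocycle {Y : Type*} [MeasurableSpace Y] (S : Y → Y) (ν : Measure Y)
    (α : Y → AutI) : Prop :=
  ∀ᵐ y ∂ν, ∃ n : ℕ → ℕ, StrictMono n ∧ TendstoIdWeak fun k => cocIter S α (n k) y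

/-- The depth-`k` dyadic partition of the unit interval, as a labeled partition. -/
noncomputable def dyadicLabel (k : ℕ) (t : unitInterval) : Fin (2 ^ k) :=
  ⟨min ⌊(t : ℝ) * 2 ^ k⌋₊ (2 ^ k - 1), by
    have h : 0 < 2 ^ k := pow_pos (by norm_num) k
    omega⟩

end AutIDefs

/-!
If `α` is not rigid, then for some depth `k`, lag `N` and `δ > 0` the set `B` of points `y` at
which every `α_g(y)` with `g ≥ N` moves a `δ`-proportion of the depth-`k` dyadic partition of `I`
has positive measure: otherwise a diagonal extraction gives rigidity times at almost every `y`,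
because dyadic sets are dense in the measure algebra of `I`.

Take for `P` the depth-`k` dyadic partition of the fibre. Along a finite `F ⊆ ℕ` a typical `y`
visits `B` at least `ν(B) |F| / 2` times, and an `N`-separated subset of these visit times gives
fibre itineraries `t ↦ P(T^f (y, t))` that are pairwise `δ`-apart in measure. A Hamming `ε`-cover
of the fibre by `M` sets separates at most `(2^k)^M` of them, up to `O(ε |F| / δ)` exceptions, so
`M ≥ log (c |F|) / (k log 2)` and the relative slow entropy at rate `log n` is positive.
-/

open scoped unitInterval

section Cocycle

variable {Y : Type*} (S : Y → Y) (α : Y → AutI)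

lemma skewMap_iterate (n : ℕ) (y : Y) (t : I) :
    (skewMap S α)^[n] (y, t) = (S^[n] y, cocIter S α n y t) := by
  induction n generalizing y t with
  | zero => rfl
  | succ n ih => exact ih (S y) ((α y).1 t)

lemma cocIter_add (f g : ℕ) (y : Y) (t : I) :
    cocIter S α (f + g) y t = cocIter S α g (S^[f] y) (cocIter S α f y t) := by
  induction f generalizing y t with
  | zero => simp [cocIter]
  | succ f ih => rw [Nat.add_right_comm]; exact ih (S y) ((α y).1 t)

lemma measurePreserving_cocIter (n : ℕ) (y : Y) :
    MeasurePreserving (cocIter S α n y) volume volume := by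
  induction n generalizing y with
  | zero => exact MeasurePreserving.id _
  | succ n ih => exact (ih (S y)).comp (α y).2

end Cocycle

section Dyadic

lemma measurable_dyadicLabel (k : ℕ) : Measurable (dyadicLabel k) :=
  (measurable_from_nat (f := fun n => (⟨min n (2 ^ k - 1), by
    have := Nat.one_le_two_pow (n := k); omega⟩ : Fin (2 ^ k)))).comp
    (Nat.measurable_floor.comp (by fun_prop))

lemma dyadicLabel_mono (k : ℕ) : Monotone (dyadicLabel k) := fun s t hst =>
  min_le_min_right _ (Nat.floor_le_floor (by gcongr))

lemma dyadicLabel_val_eq_div (k d : ℕ) (t : I) :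
    (dyadicLabel k t : ℕ) = dyadicLabel (k + d) t / 2 ^ d := by
  have hdiv : Monotone fun n : ℕ => n / 2 ^ d := fun _ _ h => Nat.div_le_div_right h
  simp only [dyadicLabel]
  rw [hdiv.map_min, ← Nat.floor_div_natCast]
  have hA := Nat.one_le_two_pow (n := k)
  have hB := Nat.one_le_two_pow (n := d)
  have hAB : 1 ≤ 2 ^ k * 2 ^ d := Nat.one_le_iff_ne_zero.2 (by positivity)
  congr 2
  · push_cast; rw [pow_add]; field_simp
  · rw [pow_add]
    refine (Nat.div_eq_of_lt_le ?_ ?_).symm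
    · rw [Nat.sub_mul, one_mul]; omega
    · rw [Nat.sub_add_cancel hA]; omega

lemma lt_iff_exists_dyadicLabel_lt {s t : I} :
    s < t ↔ ∃ k, dyadicLabel k s < dyadicLabel k t := by
  refine ⟨fun hst => ?_, fun ⟨k, hk⟩ => lt_of_not_ge fun hts => hk.not_ge (dyadicLabel_mono k hts)⟩
  obtain ⟨k, hk⟩ := pow_unbounded_of_one_lt (2 / ((t : ℝ) - s)) one_lt_two
  have hgap : (s : ℝ) * 2 ^ k + 2 < t * 2 ^ k := by
    rw [div_lt_iff₀ (sub_pos.2 (show (s : ℝ) < t from hst))] at hk; linarith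
  have hs := Nat.floor_le (mul_nonneg s.2.1 (by positivity : (0 : ℝ) ≤ 2 ^ k))
  have hlt : ⌊(s : ℝ) * 2 ^ k⌋₊ + 2 ≤ ⌊(t : ℝ) * 2 ^ k⌋₊ :=
    Nat.le_floor (by push_cast; linarith)
  have hle : ⌊(t : ℝ) * 2 ^ k⌋₊ ≤ 2 ^ k := Nat.floor_le_of_le
    (by simpa using mul_le_mul_of_nonneg_right t.2.2 (by positivity : (0 : ℝ) ≤ 2 ^ k))
  refine ⟨k, Fin.lt_def.2 ?_⟩
  simp only [dyadicLabel]
  omega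

def dyadicSets : Set (Set I) := {s | ∃ k, ∃ J : Set (Fin (2 ^ k)), dyadicLabel k ⁻¹' J = s}

lemma exists_dyadicLabel_preimage_eq {k k' : ℕ} (h : k ≤ k') (J : Set (Fin (2 ^ k))) :
    ∃ J' : Set (Fin (2 ^ k')), dyadicLabel k' ⁻¹' J' = dyadicLabel k ⁻¹' J := by
  obtain ⟨d, rfl⟩ := Nat.exists_eq_add_of_le h
  refine ⟨{j | ∃ i ∈ J, (i : ℕ) = j / 2 ^ d}, ?_⟩
  ext t
  simp [← dyadicLabel_val_eq_div, Fin.val_inj]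

lemma isSetAlgebra_dyadicSets : IsSetAlgebra dyadicSets where
  empty_mem := ⟨0, ∅, rfl⟩
  compl_mem := by
    rintro _ ⟨k, J, rfl⟩
    exact ⟨k, Jᶜ, rfl⟩
  union_mem := by
    rintro _ _ ⟨k, J, rfl⟩ ⟨k', J', rfl⟩
    obtain ⟨K, hK⟩ := exists_dyadicLabel_preimage_eq (le_max_left k k') J
    obtain ⟨K', hK'⟩ := exists_dyadicLabel_preimage_eq (le_max_right k k') J'
    exact ⟨max k k', K ∪ K', by rw [Set.preimage_union, hK, hK']⟩

lemma generateFrom_dyadicSets :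
    (inferInstance : MeasurableSpace I) = MeasurableSpace.generateFrom dyadicSets := by
  refine le_antisymm ?_ (MeasurableSpace.generateFrom_le ?_)
  · rw [BorelSpace.measurable_eq (α := I), borel_eq_generateFrom_Iio]
    refine MeasurableSpace.generateFrom_le ?_
    rintro _ ⟨t, rfl⟩
    have : Set.Iio t = ⋃ k, dyadicLabel k ⁻¹' Set.Iio (dyadicLabel k t) := by
      ext s; simp [lt_iff_exists_dyadicLabel_lt]
    rw [this]
    exact MeasurableSet.iUnion fun k => MeasurableSpace.measurableSet_generateFrom ⟨k, _, rfl⟩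
  · rintro _ ⟨k, J, rfl⟩
    exact measurable_dyadicLabel k MeasurableSet.of_discrete

lemma exists_dyadic_symmDiff_lt {E : Set I} (hE : MeasurableSet E) {c : ℝ≥0∞} (hc : 0 < c) :
    ∃ k, ∃ J : Set (Fin (2 ^ k)), volume (E ∆ (dyadicLabel k ⁻¹' J)) < c := by
  obtain ⟨r, -, hr0, hrc⟩ := ENNReal.lt_iff_exists_real_btwn.1 hc
  obtain ⟨_, ⟨k, J, rfl⟩, hJ⟩ := (Measure.MeasureDense.of_generateFrom_isSetAlgebra_finite volume
    isSetAlgebra_dyadicSets generateFrom_dyadicSets).approx E hE (measure_ne_top _ _) r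
    (ENNReal.ofReal_pos.1 hr0)
  exact ⟨k, J, hJ.trans hrc⟩

end Dyadic

section Rigidity

def dyadicMoved (k : ℕ) (φ : I → I) : Set I := {t | dyadicLabel k (φ t) ≠ dyadicLabel k t}

lemma dyadicMoved_mono {k k' : ℕ} (h : k ≤ k') (φ : I → I) :
    dyadicMoved k φ ⊆ dyadicMoved k' φ := by
  obtain ⟨d, rfl⟩ := Nat.exists_eq_add_of_le h
  intro t ht hcon
  exact ht (Fin.ext (by rw [dyadicLabel_val_eq_div k d, dyadicLabel_val_eq_div k d, hcon]))

lemma measurableSet_dyadicMoved (k : ℕ) {φ : I → I} (hφ : Measurable φ) :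
    MeasurableSet (dyadicMoved k φ) :=
  (measurableSet_eq_fun ((measurable_dyadicLabel k).comp hφ) (measurable_dyadicLabel k)).compl

lemma preimage_symmDiff_subset_dyadicMoved (k : ℕ) (φ : I → I) (J : Set (Fin (2 ^ k))) :
    (φ ⁻¹' (dyadicLabel k ⁻¹' J)) ∆ (dyadicLabel k ⁻¹' J) ⊆ dyadicMoved k φ := by
  rintro t (⟨h₁, h₂⟩ | ⟨h₁, h₂⟩) hcon <;> simp_all

lemma tendstoIdWeak_of_tendsto_dyadicMoved {φ : ℕ → I → I}
    (hφ : ∀ m, MeasurePreserving (φ m) volume volume)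
    (h : ∀ k, Tendsto (fun m => volume (dyadicMoved k (φ m))) atTop (𝓝 0)) :
    TendstoIdWeak φ := by
  intro E hE
  refine ENNReal.tendsto_nhds_zero.2 fun c hc => ?_
  have hc3 : 0 < c / 3 := ENNReal.div_pos hc.ne' (by norm_num)
  obtain ⟨k, J, hJ⟩ := exists_dyadic_symmDiff_lt hE hc3
  set D := dyadicLabel k ⁻¹' J
  have hD : MeasurableSet D := measurable_dyadicLabel k MeasurableSet.of_discrete
  filter_upwards [(h k).eventually_le_const hc3] with m hm
  calc volume ((φ m ⁻¹' E) ∆ E)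
      ≤ volume (φ m ⁻¹' (E ∆ D)) + volume ((φ m ⁻¹' D) ∆ D) + volume (D ∆ E) := by
        rw [Set.preimage_symmDiff]
        refine (measure_mono ((symmDiff_triangle _ (φ m ⁻¹' D) _).trans
          (Set.union_subset_union_right _ (symmDiff_triangle _ D _)))).trans ?_
        rw [add_assoc]
        exact (measure_union_le _ _).trans (by gcongr; exact measure_union_le _ _)
    _ ≤ c / 3 + c / 3 + c / 3 := by
        gcongr
        · rw [(hφ m).measure_preimage (hE.symmDiff hD).nullMeasurableSet]; exact hJ.le
        · exact (measure_mono (preimage_symmDiff_subset_dyadicMoved k (φ m) J)).trans hm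
        · rw [symmDiff_comm]; exact hJ.le
    _ = c := ENNReal.add_thirds c

lemma setOf_dyadicLabel_iterate_ne {Y : Type*} {S : Y → Y} {α : Y → AutI} (k f g : ℕ) (y : Y) :
    {t : I | dyadicLabel k ((skewMap S α)^[f] (y, t)).2 ≠
      dyadicLabel k ((skewMap S α)^[f + g] (y, t)).2} =
      cocIter S α f y ⁻¹' dyadicMoved k (cocIter S α g (S^[f] y)) := by
  ext t
  simp only [skewMap_iterate, cocIter_add, dyadicMoved, Set.mem_preimage, Set.mem_ofPred_eq]
  exact ne_comm

variable {Y : Type*} [MeasurableSpace Y] {S : Y → Y} {α : Y → AutI}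

variable (S α) in
def nonRigidSet (k : ℕ) (δ : ℝ) (N : ℕ) : Set Y :=
  {y | ∀ g, N ≤ g → ENNReal.ofReal δ ≤ volume (dyadicMoved k (cocIter S α g y))}

lemma measurable_volume_dyadicMoved (hα : Measurable (skewMap S α)) (k g : ℕ) :
    Measurable fun y => volume (dyadicMoved k (cocIter S α g y)) := by
  have hs : MeasurableSet {p : Y × I | dyadicLabel k ((skewMap S α)^[g] p).2 ≠ dyadicLabel k p.2} :=
    (measurableSet_eq_fun ((measurable_dyadicLabel k).comp (measurable_snd.comp (hα.iterate g)))
      ((measurable_dyadicLabel k).comp measurable_snd)).compl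
  convert measurable_measure_prodMk_left (ν := (volume : Measure I)) hs using 3 with y
  ext t
  simp [dyadicMoved, skewMap_iterate]

lemma measurableSet_nonRigidSet (hα : Measurable (skewMap S α)) (k : ℕ) (δ : ℝ) (N : ℕ) :
    MeasurableSet (nonRigidSet S α k δ N) := by
  simp only [nonRigidSet, Set.ofPred_forall]
  exact MeasurableSet.iInter fun g => MeasurableSet.iInter fun _ =>
    measurableSet_le measurable_const (measurable_volume_dyadicMoved hα k g)

theorem exists_measure_nonRigidSet_ne_zero {ν : Measure Y} (h : ¬ IsRigidCocycle S ν α) :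
    ∃ k N δ, 0 < N ∧ 0 < δ ∧ ν (nonRigidSet S α k δ N) ≠ 0 := by
  contrapose! h
  have hae : ∀ᵐ y ∂ν, ∀ k j N : ℕ, y ∉ nonRigidSet S α k (1 / (j + 1)) (N + 1) := by
    simp only [ae_all_iff]
    exact fun k j N => measure_eq_zero_iff_ae_notMem.1 (h k (N + 1) _ N.succ_pos (by positivity))
  filter_upwards [hae] with y hy
  obtain ⟨n, hn, hmoved⟩ := extraction_forall_of_frequently (P := fun m g =>
    volume (dyadicMoved m (cocIter S α g y)) < ENNReal.ofReal (1 / (m + 1))) fun m => by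
      refine frequently_atTop.2 fun N => ?_
      obtain ⟨g, hg, hlt⟩ : ∃ g, N < g ∧ _ := by simpa [nonRigidSet] using hy m m N
      exact ⟨g, hg.le, by simpa using hlt⟩
  refine ⟨n, hn, tendstoIdWeak_of_tendsto_dyadicMoved (fun m => measurePreserving_cocIter S α _ y)
    fun k => ?_⟩
  have hlim : Tendsto (fun m : ℕ => ENNReal.ofReal (1 / (m + 1))) atTop (𝓝 0) := by
    simpa using ENNReal.tendsto_ofReal tendsto_one_div_add_atTop_nhds_zero_nat
  refine tendsto_of_tendsto_of_tendsto_of_le_of_le' tendsto_const_nhds hlim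
    (Eventually.of_forall fun _ => zero_le) ?_
  filter_upwards [eventually_ge_atTop k] with m hm
  exact (measure_mono (dyadicMoved_mono hm _)).trans (hmoved m).le

end Rigidity

lemma exists_separated_subset {N : ℕ} (hN : 0 < N) (X : Finset ℕ) :
    ∃ G ⊆ X, (∀ a ∈ G, ∀ b ∈ G, a < b → N ≤ b - a) ∧ X.card ≤ N * G.card := by
  classical
  have hsum : ∑ _r ∈ Finset.range N, X.card =
      ∑ r ∈ Finset.range N, N * (X.filter (· % N = r)).card := by
    rw [← Finset.mul_sum, ← Finset.card_eq_sum_card_fiberwise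
      fun a _ => Finset.mem_range.2 (Nat.mod_lt a hN), Finset.sum_const, Finset.card_range,
      smul_eq_mul]
  obtain ⟨r, -, hr⟩ := Finset.exists_le_of_sum_le (Finset.nonempty_range_iff.2 hN.ne') hsum.le
  refine ⟨X.filter (· % N = r), Finset.filter_subset _ _, fun a ha b hb hab => ?_, hr⟩
  have hab' : a ≡ b [MOD N] := (Finset.mem_filter.1 ha).2.trans (Finset.mem_filter.1 hb).2.symm
  exact Nat.le_of_dvd (Nat.sub_pos_of_lt hab) ((Nat.modEq_iff_dvd' hab.le).1 hab')

lemma IsFolnerNat.tendsto_card {F : ℕ → Finset ℕ} (hF : IsFolnerNat F) :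
    Tendsto (fun n => (F n).card) atTop atTop := by
  refine tendsto_atTop.2 fun K => ?_
  have hK : 1 - 1 / ((K : ℝ) + 1) < 1 := by
    have : 0 < 1 / ((K : ℝ) + 1) := by positivity
    linarith
  filter_upwards [(hF.2 1).eventually (lt_mem_nhds hK)] with n hn
  have hne := hF.1 n
  -- the least element of `F n` is not in `1 + F n`
  have hshift : ((F n).image (1 + ·) ∩ F n).card + 1 ≤ (F n).card := by
    have hsub : (F n).image (1 + ·) ∩ F n ⊆ (F n).erase ((F n).min' hne) := fun x hx => by
      obtain ⟨⟨h, hh, rfl⟩, hx⟩ := Finset.mem_inter.1 hx |>.imp_left Finset.mem_image.1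
      exact Finset.mem_erase.2 ⟨by have := (F n).min'_le h hh; omega, hx⟩
    have := Finset.card_le_card hsub
    rw [Finset.card_erase_of_mem ((F n).min'_mem hne)] at this
    have := hne.card_pos
    omega
  have hc : (0 : ℝ) < (F n).card := by exact_mod_cast hne.card_pos
  rw [lt_div_iff₀ hc, sub_mul, one_div_mul_eq_div] at hn
  have hshift' : (((F n).image (1 + ·) ∩ F n).card : ℝ) + 1 ≤ (F n).card := by
    exact_mod_cast hshift
  have hKc : (K : ℝ) + 1 < (F n).card := (one_lt_div (by positivity)).1 (by linarith)
  exact_mod_cast (by linarith : (K : ℝ) ≤ (F n).card)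

lemma half_measure_le_measure_setOf_card_visits {Y : Type*} [MeasurableSpace Y] {ν : Measure Y}
    [IsProbabilityMeasure ν] {S : Y → Y} (hS : MeasurePreserving S ν ν) {B : Set Y}
    (hB : MeasurableSet B) {F : Finset ℕ} (hF : F.Nonempty) :
    ν B / 2 ≤ ν {y | ν B / 2 * F.card ≤ ((F.filter fun f => S^[f] y ∈ B).card : ℝ≥0∞)} := by
  set V : Y → ℝ≥0∞ := fun y => ((F.filter fun f => S^[f] y ∈ B).card : ℝ≥0∞)
  set G := {y | ν B / 2 * F.card ≤ V y}
  have hpre : ∀ f, MeasurableSet (S^[f] ⁻¹' B) := fun f => hS.measurable.iterate f hB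
  have hV : V = fun y => ∑ f ∈ F, (S^[f] ⁻¹' B).indicator 1 y := by
    ext y; simp [V, Set.indicator_apply]
  have hVmeas : Measurable V :=
    hV ▸ Finset.measurable_sum _ fun f _ => measurable_one.indicator (hpre f)
  have hint : ∫⁻ y, V y ∂ν = F.card * ν B := by
    rw [hV, lintegral_finsetSum _ fun f _ => measurable_one.indicator (hpre f)]
    simp_rw [lintegral_indicator_one (hpre _), (hS.iterate _).measure_preimage hB.nullMeasurableSet,
      Finset.sum_const, nsmul_eq_mul]
  have hpt : ∀ y, V y ≤ G.indicator (fun _ => (F.card : ℝ≥0∞)) y + ν B / 2 * F.card := by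
    intro y
    by_cases hy : y ∈ G
    · rw [Set.indicator_of_mem hy]
      exact le_add_right (Nat.cast_le.2 (Finset.card_filter_le _ _))
    · rw [Set.indicator_of_notMem hy, zero_add]
      exact (not_le.1 hy).le
  have hbound : (F.card : ℝ≥0∞) * ν B ≤ F.card * (ν G + ν B / 2) := by
    calc (F.card : ℝ≥0∞) * ν B = ∫⁻ y, V y ∂ν := hint.symm
      _ ≤ ∫⁻ y, G.indicator (fun _ => (F.card : ℝ≥0∞)) y + ν B / 2 * F.card ∂ν :=
          lintegral_mono hpt
      _ = F.card * (ν G + ν B / 2) := by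
          rw [lintegral_add_right _ measurable_const, lintegral_indicator_const
            (measurableSet_le measurable_const hVmeas), lintegral_const, measure_univ]
          ring
  have hcard : (F.card : ℝ≥0∞) ≠ 0 := Nat.cast_ne_zero.2 hF.card_pos.ne'
  have := (ENNReal.mul_le_mul_iff_right hcard (ENNReal.natCast_ne_top _)).1 hbound
  calc ν B / 2 = ν B - ν B / 2 := (ENNReal.sub_half (measure_ne_top ν B)).symm
    _ ≤ ν G := tsub_le_iff_right.2 this

lemma exists_mem_frequent_visits {Y : Type*} [MeasurableSpace Y] {ν : Measure Y}
    [IsProbabilityMeasure ν] {S : Y → Y} (hS : MeasurePreserving S ν ν) {B : Set Y}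
    (hB : MeasurableSet B) {F : Finset ℕ} (hF : F.Nonempty) {A : Set Y} (hA : MeasurableSet A)
    {ε : ℝ} (hε : ε < ν.real B / 2) (hAν : ENNReal.ofReal (1 - ε) ≤ ν A) :
    ∃ y ∈ A, ν.real B / 2 * F.card ≤ (F.filter fun f => S^[f] y ∈ B).card := by
  have hβ : 0 ≤ ν.real B := measureReal_nonneg
  have hβ1 : ν.real B ≤ 1 := measureReal_le_one
  obtain ⟨y, hy, hyA⟩ : ({y | ν B / 2 * F.card ≤
      ((F.filter fun f => S^[f] y ∈ B).card : ℝ≥0∞)} ∩ A).Nonempty := by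
    refine nonempty_inter_of_measure_lt_add ν hA (Set.subset_univ _) (Set.subset_univ _) ?_
    calc ν Set.univ = ENNReal.ofReal 1 := by simp
      _ < ENNReal.ofReal (ν.real B / 2) + ENNReal.ofReal (1 - ε) := by
          rw [← ENNReal.ofReal_add (by positivity) (by linarith)]
          exact (ENNReal.ofReal_lt_ofReal_iff (by linarith)).2 (by linarith)
      _ ≤ _ := by
          gcongr
          refine le_of_eq_of_le ?_ (half_measure_le_measure_setOf_card_visits hS hB hF)
          rw [ENNReal.ofReal_div_of_pos two_pos, ENNReal.ofReal_ofNat, measureReal_def,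
            ENNReal.ofReal_toReal (measure_ne_top _ _)]
  refine ⟨y, hyA, ?_⟩
  simpa [ENNReal.toReal_mul, measureReal_def] using
    ENNReal.toReal_mono (ENNReal.natCast_ne_top _) hy

section Covering

variable {X : Type*} [MeasurableSpace X] (T : X → X) {r : ℕ} (P : X → Fin r) (F : Finset ℕ)
  {ε : ℝ}

lemma pow_card_mem_setOf_hamCover (lam : Measure X) [IsProbabilityMeasure lam] (hε : 0 ≤ ε) :
    r ^ F.card ∈ {M : ℕ | ∃ E : Fin M → Set X, (∀ i, diamLENat T P F (E i) ε) ∧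
      ENNReal.ofReal (1 - ε) ≤ lam (⋃ i, E i)} := by
  classical
  -- cover by the cylinders of all `F`-itineraries
  let e : (F → Fin r) ≃ Fin (r ^ F.card) := Fintype.equivFinOfCardEq (by simp)
  refine ⟨fun i => {x | (fun f : F => P (T^[f] x)) = e.symm i}, fun i x hx x' hx' => ?_, ?_⟩
  · have : (F.filter fun f => P (T^[f] x) ≠ P (T^[f] x')) = ∅ :=
      Finset.filter_eq_empty_iff.2 fun f hf => not_not.2 (congrFun (hx.trans hx'.symm) ⟨f, hf⟩)
    simp [hamDistNat, this, hε]
  · have : (⋃ i, {x | (fun f : F => P (T^[f] x)) = e.symm i}) = Set.univ :=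
      Set.eq_univ_of_forall fun x => Set.mem_iUnion.2 ⟨e fun f => P (T^[f] x), by simp⟩
    rw [this, measure_univ]
    exact ENNReal.ofReal_le_one.2 (by linarith)

lemma exists_cover_of_hamCovNat (lam : Measure X) [IsProbabilityMeasure lam] (hε : 0 ≤ ε) :
    ∃ E : Fin (hamCovNat T lam P F ε) → Set X, (∀ i, diamLENat T P F (E i) ε) ∧
      ENNReal.ofReal (1 - ε) ≤ lam (⋃ i, E i) :=
  Nat.sInf_mem ⟨_, pow_card_mem_setOf_hamCover T P F lam hε⟩

lemma hamCovNat_le_pow_card (lam : Measure X) [IsProbabilityMeasure lam] (hε : 0 ≤ ε) :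
    hamCovNat T lam P F ε ≤ r ^ F.card :=
  Nat.sInf_le (pow_card_mem_setOf_hamCover T P F lam hε)

lemma exists_hamCovNat_le_hamCovRelNat {Y : Type*} [MeasurableSpace Y] (μy : Y → Measure X)
    [∀ y, IsProbabilityMeasure (μy y)] (ν : Measure Y) [IsProbabilityMeasure ν] (hε : 0 ≤ ε) :
    ∃ S : Set Y, MeasurableSet S ∧ ENNReal.ofReal (1 - ε) ≤ ν S ∧
      ∀ y ∈ S, hamCovNat T (μy y) P F ε ≤ hamCovRelNat T μy ν P F ε := by
  have huniv : ENNReal.ofReal (1 - ε) ≤ ν Set.univ := by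
    rw [measure_univ]
    exact ENNReal.ofReal_le_one.2 (by linarith)
  exact Nat.sInf_mem (s := {M : ℕ | ∃ S : Set Y, MeasurableSet S ∧
    ENNReal.ofReal (1 - ε) ≤ ν S ∧ ∀ y ∈ S, hamCovNat T (μy y) P F ε ≤ M})
    ⟨r ^ F.card, Set.univ, MeasurableSet.univ, huniv,
      fun y _ => hamCovNat_le_pow_card T P F (μy y) hε⟩

end Covering

lemma exists_fiber_cover {Y Ω : Type*} [MeasurableSpace Y] [MeasurableSingletonClass Y]
    [MeasurableSpace Ω] [Nonempty Ω] (m : Measure Ω) [SFinite m] (T : Y × Ω → Y × Ω) {r : ℕ}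
    (P : Y × Ω → Fin r) {F : Finset ℕ} (hF : F.Nonempty) {ε : ℝ} (y : Y)
    (hη : ∀ f, Measurable fun t => P (T^[f] (y, t))) {M : ℕ} {E : Fin M → Set (Y × Ω)}
    (hE : ∀ i, diamLENat T P F (E i) ε)
    (hcov : ENNReal.ofReal (1 - ε) ≤ (Measure.dirac y).prod m (⋃ i, E i)) :
    ∃ (C : Fin M → Set Ω) (z : Fin M → Ω), (∀ i, MeasurableSet (C i)) ∧
      (∀ i, ∀ t ∈ C i,
        ((F.filter fun f => P (T^[f] (y, t)) ≠ P (T^[f] (y, z i))).card : ℝ) ≤ ε * F.card) ∧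
      ENNReal.ofReal (1 - ε) ≤ m (⋃ i, C i) := by
  classical
  let z : Fin M → Ω := fun i =>
    if h : ∃ t, (y, t) ∈ E i then h.choose else Classical.arbitrary Ω
  let C : Fin M → Set Ω := fun i =>
    {t | ((F.filter fun f => P (T^[f] (y, t)) ≠ P (T^[f] (y, z i))).card : ℝ) ≤ ε * F.card}
  have hC : ∀ i, MeasurableSet (C i) := fun i => by
    have : Measurable fun t => (F.filter fun f => P (T^[f] (y, t)) ≠ P (T^[f] (y, z i))).card := by
      simp_rw [Finset.card_filter]
      exact Finset.measurable_sum _ fun f _ => Measurable.ite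
        (measurableSet_eq_fun (hη f) measurable_const).compl measurable_const measurable_const
    exact this (MeasurableSet.of_discrete (s := {n : ℕ | (n : ℝ) ≤ ε * F.card}))
  have hfiber : ∀ i t, (y, t) ∈ E i → t ∈ C i := by
    intro i t ht
    have hz : (y, z i) ∈ E i := by
      simp only [z, dif_pos (⟨t, ht⟩ : ∃ t, (y, t) ∈ E i)]
      exact Exists.choose_spec (⟨t, ht⟩ : ∃ t, (y, t) ∈ E i)
    have := hE i _ ht _ hz
    rwa [hamDistNat, div_le_iff₀ (by exact_mod_cast hF.card_pos)] at this
  refine ⟨C, z, hC, fun i t ht => ht, hcov.trans ?_⟩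
  set W := (Prod.fst ⁻¹' {y})ᶜ ∪ Prod.snd ⁻¹' ⋃ i, C i
  have hW : MeasurableSet W :=
    (measurable_fst (measurableSet_singleton y)).compl.union
      (measurable_snd (MeasurableSet.iUnion hC))
  calc (Measure.dirac y).prod m (⋃ i, E i) ≤ (Measure.dirac y).prod m W := by
        refine measure_mono fun p hp => ?_
        obtain ⟨i, hi⟩ := Set.mem_iUnion.1 hp
        by_cases hpy : p.1 = y
        · exact Or.inr (Set.mem_iUnion.2 ⟨i, hfiber i p.2 (by rw [← hpy]; exact hi)⟩)
        · exact Or.inl hpy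
    _ = m (⋃ i, C i) := by
        rw [Measure.dirac_prod, Measure.map_apply measurable_prodMk_left hW]
        congr 1
        ext t
        simp [W]

lemma measure_compl_le_ofReal {Ω : Type*} [MeasurableSpace Ω] {μ : Measure Ω}
    [IsProbabilityMeasure μ] {A : Set Ω} (hA : MeasurableSet A) {ε : ℝ}
    (h : ENNReal.ofReal (1 - ε) ≤ μ A) : μ Aᶜ ≤ ENNReal.ofReal ε := by
  rw [prob_compl_eq_one_sub hA, tsub_le_iff_right]
  calc (1 : ℝ≥0∞) = ENNReal.ofReal (ε + (1 - ε)) := by simp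
    _ ≤ ENNReal.ofReal ε + ENNReal.ofReal (1 - ε) := ENNReal.ofReal_add_le
    _ ≤ ENNReal.ofReal ε + μ A := by gcongr

lemma card_filter_lt_mul_le {ι : Type*} {G : Finset ι} {a : ι → ℝ≥0∞} {A b : ℝ} (hA : 0 ≤ A)
    (h : ∑ f ∈ G, a f ≤ ENNReal.ofReal A) :
    ((G.filter fun f => ENNReal.ofReal b < a f).card : ℝ) * b ≤ A := by
  refine (ENNReal.ofReal_le_ofReal_iff hA).1 ?_
  calc ENNReal.ofReal ((G.filter fun f => ENNReal.ofReal b < a f).card * b)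
      = (G.filter fun f => ENNReal.ofReal b < a f).card • ENNReal.ofReal b := by
        rw [ENNReal.ofReal_mul (Nat.cast_nonneg _), ENNReal.ofReal_natCast, nsmul_eq_mul]
    _ ≤ ∑ f ∈ G.filter fun f => ENNReal.ofReal b < a f, a f :=
        Finset.card_nsmul_le_sum _ _ _ fun f hf => (Finset.mem_filter.1 hf).2.le
    _ ≤ ∑ f ∈ G, a f := Finset.sum_le_sum_of_subset (Finset.filter_subset _ _)
    _ ≤ ENNReal.ofReal A := h

lemma measurableSet_disjointed {Ω ι : Type*} [MeasurableSpace Ω] [Preorder ι]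
    [LocallyFiniteOrderBot ι] [Countable ι] {C : ι → Set Ω} (hC : ∀ i, MeasurableSet (C i))
    (i : ι) : MeasurableSet (disjointed C i) := by
  rw [disjointed_eq_inter_compl]
  exact (hC i).inter (MeasurableSet.biInter (Set.to_countable _) fun j _ => (hC j).compl)

section Counting

variable {Ω : Type*} {M : ℕ}

def mismatchSet {β : Type*} (D : Fin M → Set Ω) (z : Fin M → Ω) (η : Ω → β) : Set Ω :=
  ⋃ i, D i ∩ {t | η t ≠ η (z i)}

lemma measure_setOf_ne_le_of_forall_eq [MeasurableSpace Ω] (m : Measure Ω) {β : Type*}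
    (D : Fin M → Set Ω) (z : Fin M → Ω) {η η' : Ω → β} (hcode : ∀ i, η (z i) = η' (z i)) :
    m {t | η t ≠ η' t} ≤ m (⋃ i, D i)ᶜ + (m (mismatchSet D z η) + m (mismatchSet D z η')) := by
  refine (measure_mono fun t ht => ?_).trans
    ((measure_union_le _ _).trans (by gcongr; exact measure_union_le _ _))
  by_cases htD : t ∈ ⋃ i, D i
  · obtain ⟨i, hi⟩ := Set.mem_iUnion.1 htD
    by_cases h : η t = η (z i)
    · exact Or.inr (Or.inr (Set.mem_iUnion.2
        ⟨i, hi, fun h' => ht (h.trans ((hcode i).trans h'.symm))⟩))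
    · exact Or.inr (Or.inl (Set.mem_iUnion.2 ⟨i, hi, h⟩))
  · exact Or.inl htD

lemma sum_measure_mismatchSet_le [MeasurableSpace Ω] {m : Measure Ω} [IsProbabilityMeasure m]
    {r : ℕ} {η : ℕ → Ω → Fin r} (hη : ∀ f, Measurable (η f)) {F G : Finset ℕ} (hGF : G ⊆ F)
    {ε : ℝ} {D : Fin M → Set Ω} (hD : ∀ i, MeasurableSet (D i))
    (hdisj : Pairwise (Function.onFun Disjoint D)) (z : Fin M → Ω)
    (hrow : ∀ i, ∀ t ∈ D i, ((F.filter fun f => η f t ≠ η f (z i)).card : ℝ) ≤ ε * F.card) :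
    ∑ f ∈ G, m (mismatchSet D z (η f)) ≤ ENNReal.ofReal (ε * F.card) := by
  have hA : ∀ f i, MeasurableSet {t | η f t ≠ η f (z i)} := fun f i =>
    (measurableSet_eq_fun (hη f) measurable_const).compl
  calc ∑ f ∈ G, m (mismatchSet D z (η f))
      = ∑ i, ∫⁻ t in D i, ∑ f ∈ G, {t | η f t ≠ η f (z i)}.indicator 1 t ∂m := by
        simp_rw [mismatchSet, measure_iUnion (fun i j hij => (hdisj hij).mono Set.inter_subset_left
          Set.inter_subset_left) (fun i => (hD i).inter (hA _ i)), tsum_fintype]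
        rw [Finset.sum_comm]
        refine Finset.sum_congr rfl fun i _ => ?_
        rw [lintegral_finsetSum _ fun f _ => measurable_one.indicator (hA f i)]
        simp_rw [lintegral_indicator_one (hA _ i), Measure.restrict_apply (hA _ i), Set.inter_comm]
    _ ≤ ∑ i, ∫⁻ _ in D i, ENNReal.ofReal (ε * F.card) ∂m := by
        refine Finset.sum_le_sum fun i _ => setLIntegral_mono measurable_const fun t ht => ?_
        calc ∑ f ∈ G, {t | η f t ≠ η f (z i)}.indicator 1 t
            = ((G.filter fun f => η f t ≠ η f (z i)).card : ℝ≥0∞) := by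
              simp only [Set.indicator_apply, Set.mem_ofPred_eq, Pi.one_apply, Finset.sum_boole]
          _ ≤ ENNReal.ofReal ((F.filter fun f => η f t ≠ η f (z i)).card) := by
              rw [ENNReal.ofReal_natCast]
              exact_mod_cast Finset.card_le_card (Finset.filter_subset_filter _ hGF)
          _ ≤ _ := ENNReal.ofReal_le_ofReal (hrow i t ht)
    _ = ENNReal.ofReal (ε * F.card) * m (⋃ i, D i) := by
        simp_rw [setLIntegral_const, ← Finset.mul_sum, measure_iUnion hdisj hD, tsum_fintype]
    _ ≤ ENNReal.ofReal (ε * F.card) := mul_le_of_le_one_right' prob_le_one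

theorem card_le_pow_add_of_separated {Ω : Type*} [MeasurableSpace Ω] {m : Measure Ω}
    [IsProbabilityMeasure m] {r M : ℕ} {η : ℕ → Ω → Fin r} (hη : ∀ f, Measurable (η f))
    {F G : Finset ℕ} (hGF : G ⊆ F) {δ ε : ℝ} (hε : 0 ≤ ε) (hεδ : ε < δ / 3)
    (hsep : ∀ f ∈ G, ∀ f' ∈ G, f < f' → ENNReal.ofReal δ ≤ m {t | η f t ≠ η f' t})
    {C : Fin M → Set Ω} (hC : ∀ i, MeasurableSet (C i)) (z : Fin M → Ω)
    (hrow : ∀ i, ∀ t ∈ C i, ((F.filter fun f => η f t ≠ η f (z i)).card : ℝ) ≤ ε * F.card)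
    (hcov : ENNReal.ofReal (1 - ε) ≤ m (⋃ i, C i)) :
    (G.card : ℝ) ≤ r ^ M + 3 * ε * F.card / δ := by
  classical
  have hδ : 0 < δ := by linarith
  set D := disjointed C with hD_def
  have hD : ∀ i, MeasurableSet (D i) := measurableSet_disjointed hC
  have hDc : m (⋃ i, D i)ᶜ ≤ ENNReal.ofReal ε :=
    measure_compl_le_ofReal (MeasurableSet.iUnion hD) (by rwa [hD_def, iUnion_disjointed])
  set bad := G.filter fun f => ENNReal.ofReal (δ / 3) < m (mismatchSet D z (η f))
  set good := G.filter fun f => ¬ ENNReal.ofReal (δ / 3) < m (mismatchSet D z (η f))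
  have hbad : (bad.card : ℝ) * (δ / 3) ≤ ε * F.card :=
    card_filter_lt_mul_le (by positivity) (sum_measure_mismatchSet_le hη hGF hD
      (disjoint_disjointed C) z fun i t ht => hrow i t (disjointed_subset C i ht))
  have hclose : ∀ f ∈ good, ∀ f' ∈ good, (∀ i, η f (z i) = η f' (z i)) →
      m {t | η f t ≠ η f' t} < ENNReal.ofReal δ := by
    intro f hf f' hf' hcode
    have hf := not_lt.1 (Finset.mem_filter.1 hf).2
    have hf' := not_lt.1 (Finset.mem_filter.1 hf').2
    calc m {t | η f t ≠ η f' t}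
        ≤ m (⋃ i, D i)ᶜ + (m (mismatchSet D z (η f)) + m (mismatchSet D z (η f'))) :=
          measure_setOf_ne_le_of_forall_eq m D z hcode
      _ ≤ ENNReal.ofReal ε + (ENNReal.ofReal (δ / 3) + ENNReal.ofReal (δ / 3)) := by gcongr
      _ = ENNReal.ofReal (ε + (δ / 3 + δ / 3)) := by
          rw [ENNReal.ofReal_add, ENNReal.ofReal_add] <;> positivity
      _ < ENNReal.ofReal δ := (ENNReal.ofReal_lt_ofReal_iff hδ).2 (by linarith)
  have hinj : Set.InjOn (fun f i => η f (z i)) good := by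
    intro f hf f' hf' hcode
    have hcode := congrFun hcode
    by_contra hne
    rcases lt_or_gt_of_ne hne with h | h
    · exact (hclose f hf f' hf' hcode).not_ge
        (hsep f (Finset.mem_filter.1 hf).1 f' (Finset.mem_filter.1 hf').1 h)
    · refine (hclose f' hf' f hf fun i => (hcode i).symm).not_ge ?_
      simpa only [ne_comm] using
        hsep f' (Finset.mem_filter.1 hf').1 f (Finset.mem_filter.1 hf).1 h
  have hgood : (good.card : ℝ) ≤ r ^ M := by
    exact_mod_cast (Finset.card_le_card_of_injOn _ (fun _ _ => Finset.mem_coe.2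
      (Finset.mem_univ _)) hinj).trans_eq (by simp)
  calc (G.card : ℝ) = good.card + bad.card := by
        rw [add_comm]; exact_mod_cast (Finset.card_filter_add_card_filter_not _).symm
    _ ≤ r ^ M + 3 * ε * F.card / δ := by
        gcongr
        rw [le_div_iff₀ hδ]
        linarith

end Counting

section SkewProduct

variable {Y : Type*} [MeasurableSpace Y] {S : Y → Y} {α : Y → AutI}

lemma card_visits_nonRigidSet_le [MeasurableSingletonClass Y] {k N : ℕ} (hN : 0 < N) {δ ε : ℝ}
    (hε : 0 ≤ ε) (hεδ : ε < δ / 3) {F : Finset ℕ} (hF : F.Nonempty) (y : Y) :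
    ((F.filter fun f => S^[f] y ∈ nonRigidSet S α k δ N).card : ℝ) ≤
      N * ((2 ^ k : ℝ) ^ hamCovNat (skewMap S α) ((Measure.dirac y).prod volume)
        (fun x => dyadicLabel k x.2) F ε + 3 * ε * F.card / δ) := by
  obtain ⟨E, hEdiam, hEcov⟩ := exists_cover_of_hamCovNat (skewMap S α)
    (fun x : Y × I => dyadicLabel k x.2) F ((Measure.dirac y).prod volume) hε
  have hη : ∀ f, Measurable fun t => dyadicLabel k ((skewMap S α)^[f] (y, t)).2 := fun f => by
    simp_rw [skewMap_iterate]
    exact (measurable_dyadicLabel k).comp (measurePreserving_cocIter S α f y).measurable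
  obtain ⟨C, z, hC, hrow, hCcov⟩ :=
    exists_fiber_cover volume (skewMap S α) (fun x => dyadicLabel k x.2) hF y hη hEdiam hEcov
  obtain ⟨G, hGV, hGsep, hGcard⟩ :=
    exists_separated_subset hN (F.filter fun f => S^[f] y ∈ nonRigidSet S α k δ N)
  have hsep : ∀ f ∈ G, ∀ f' ∈ G, f < f' → ENNReal.ofReal δ ≤ volume
      {t | dyadicLabel k ((skewMap S α)^[f] (y, t)).2 ≠
        dyadicLabel k ((skewMap S α)^[f'] (y, t)).2} := by
    intro f hf f' hf' hlt
    rw [← Nat.add_sub_cancel' hlt.le, setOf_dyadicLabel_iterate_ne,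
      (measurePreserving_cocIter S α f y).measure_preimage (measurableSet_dyadicMoved k
        (measurePreserving_cocIter S α _ _).measurable).nullMeasurableSet]
    exact (Finset.mem_filter.1 (hGV hf)).2 _ (hGsep f hf f' hf' hlt)
  have hcount := card_le_pow_add_of_separated hη (hGV.trans (Finset.filter_subset _ _)) hε hεδ
    hsep hC z hrow hCcov
  push_cast at hcount
  calc _ ≤ (N : ℝ) * G.card := by exact_mod_cast hGcard
    _ ≤ _ := by gcongr

end SkewProduct

section SlowEntropy

variable {X Y : Type*} [MeasurableSpace X] [MeasurableSpace Y] {T : X → X}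
  {μy : Y → Measure X} {ν : Measure Y} {r : ℕ} {P : X → Fin r} {U : ℕ → ℝ} {F : ℕ → Finset ℕ}

lemma slowEntropyPartRelNat_le_slowEntropyRelNat (hP : Measurable P) :
    slowEntropyPartRelNat T μy ν P U F ≤ slowEntropyRelNat T μy ν U F :=
  le_iSup_of_le r (le_iSup_of_le P (le_iSup_of_le hP le_rfl))

theorem slowEntropyPartRelNat_log_ne_zero (hF : Tendsto (fun n => (F n).card) atTop atTop)
    {ε c R : ℝ} (hε : 0 < ε) (hc : 0 < c) (hR : 1 ≤ R)
    (h : ∀ n, c * (F n).card ≤ R ^ hamCovRelNat T μy ν P (F n) ε) :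
    slowEntropyPartRelNat T μy ν P (fun n => Real.log n) F ≠ 0 := by
  intro h0
  set cov := fun n => hamCovRelNat T μy ν P (F n) ε
  have hlim : limsup (fun n => ENNReal.ofReal ((cov n : ℝ) / Real.log (F n).card)) atTop = 0 :=
    le_antisymm (h0 ▸ le_iSup₂_of_le (f := fun ε (_ : ε ∈ Set.Ioi (0 : ℝ)) => limsup
      (fun n => ENNReal.ofReal ((hamCovRelNat T μy ν P (F n) ε : ℝ) / Real.log (F n).card)) atTop)
      ε hε le_rfl) zero_le
  have hlogR := Real.log_nonneg hR
  set b := 1 / (2 * Real.log R + 1)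
  have hb : 0 < b := by positivity
  have hsmall : ∀ᶠ n in atTop, (cov n : ℝ) / Real.log (F n).card < b := by
    filter_upwards [eventually_lt_of_limsup_lt (hlim ▸ ENNReal.ofReal_pos.2 hb)] with n hn
    exact (ENNReal.ofReal_lt_ofReal_iff hb).1 hn
  have hlarge : ∀ᶠ n in atTop, max 1 (-2 * Real.log c) < Real.log (F n).card :=
    (Real.tendsto_log_atTop.comp (tendsto_natCast_atTop_atTop.comp hF)).eventually_gt_atTop _
  obtain ⟨n, hsmall, hlarge⟩ := (hsmall.and hlarge).exists
  set L := Real.log (F n).card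
  have hL : 1 < L := (le_max_left _ _).trans_lt hlarge
  have hcard : (0 : ℝ) < (F n).card := by
    rcases Nat.eq_zero_or_pos (F n).card with hzero | hpos
    · norm_num [L, hzero] at hL
    · exact_mod_cast hpos
  have hlog : Real.log c + L ≤ cov n * Real.log R := by
    rw [← Real.log_mul hc.ne' hcard.ne', ← Real.log_pow]
    exact Real.log_le_log (by positivity) (h n)
  have hcovL : (cov n : ℝ) < b * L := (div_lt_iff₀ (by linarith)).1 hsmall
  have hbR : b * Real.log R ≤ 1 / 2 := by
    rw [div_mul_eq_mul_div, one_mul, div_le_iff₀ (by positivity)]; linarith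
  have : (cov n : ℝ) * Real.log R ≤ L / 2 := by nlinarith
  linarith [le_max_right 1 (-2 * Real.log c)]

end SlowEntropy

theorem exists_mul_card_le_pow_hamCovRelNat {Y : Type*} [MeasurableSpace Y]
    [MeasurableSingletonClass Y] {ν : Measure Y} [IsProbabilityMeasure ν] {S : Y → Y}
    {α : Y → AutI} (hS : MeasurePreserving S ν ν) (hα : Measurable (skewMap S α)) {k N : ℕ}
    {δ : ℝ} (hN : 0 < N) (hδ : 0 < δ) (hB : ν (nonRigidSet S α k δ N) ≠ 0) :
    ∃ ε > 0, ∃ c > 0, ∀ F : Finset ℕ, F.Nonempty →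
      c * F.card ≤ (2 ^ k : ℝ) ^ hamCovRelNat (skewMap S α)
        (fun y => (Measure.dirac y).prod volume) ν (fun x => dyadicLabel k x.2) F ε := by
  set B := nonRigidSet S α k δ N
  set β := ν.real B
  have hβ : 0 < β := ENNReal.toReal_pos hB (measure_ne_top _ _)
  have hβ1 : β ≤ 1 := measureReal_le_one
  have hNR : (1 : ℝ) ≤ N := by exact_mod_cast hN
  set ε := min (β / 4) (β * δ / (12 * N))
  have hε : 0 < ε := by positivity
  have hεβ : ε ≤ β / 4 := min_le_left _ _
  have hεδ : ε ≤ β * δ / (12 * N) := min_le_right _ _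
  have h12 : ε * (12 * N) ≤ β * δ := (le_div_iff₀ (by positivity)).1 hεδ
  have hεδ' : ε < δ / 3 := by nlinarith
  refine ⟨ε, hε, β / (4 * N), by positivity, fun F hF => ?_⟩
  obtain ⟨A, hA, hAν, hAcov⟩ := exists_hamCovNat_le_hamCovRelNat (skewMap S α)
    (fun x : Y × I => dyadicLabel k x.2) F (fun y => (Measure.dirac y).prod volume) ν hε.le
  obtain ⟨y, hyA, hvisits⟩ := exists_mem_frequent_visits hS (measurableSet_nonRigidSet hα k δ N)
    hF hA (by linarith) hAν
  have hcount := card_visits_nonRigidSet_le (S := S) (α := α) (k := k) hN hε.le hεδ' hF y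
  have hpow := mul_le_mul_of_nonneg_left
    (pow_le_pow_right₀ (one_le_pow₀ (one_le_two : (1 : ℝ) ≤ 2) (n := k)) (hAcov y hyA))
    (Nat.cast_nonneg N)
  have herr : (N : ℝ) * (3 * ε * F.card / δ) ≤ β * F.card / 4 := by
    rw [mul_div_assoc', div_le_div_iff₀ hδ (by norm_num)]
    nlinarith [mul_le_mul_of_nonneg_right h12 (Nat.cast_nonneg F.card)]
  rw [div_mul_eq_mul_div, div_le_iff₀ (by positivity)]
  linarith

theorem zero_log_relative_slow_entropy_implies_rigid_extension_general
    {Y : Type*} [MeasurableSpace Y] [StandardBorelSpace Y]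
    (ν : Measure Y) [IsProbabilityMeasure ν]
    (S : Y ≃ᵐ Y) (hS : MeasurePreserving S ν ν)
    (α : Y → AutI) (hα : Measurable (skewMap (⇑S) α))
    (F : ℕ → Finset ℕ) (hF : IsFolnerNat F)
    (h0 : slowEntropyRelNat (skewMap (⇑S) α) (fun y => (Measure.dirac y).prod volume) ν
        (fun n => Real.log n) F = 0) :
    IsRigidCocycle (⇑S) ν α := by
  by_contra hnr
  obtain ⟨k, N, δ, hN, hδ, hB⟩ := exists_measure_nonRigidSet_ne_zero hnr
  obtain ⟨ε, hε, c, hc, hcov⟩ := exists_mul_card_le_pow_hamCovRelNat hS hα hN hδ hB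
  refine slowEntropyPartRelNat_log_ne_zero hF.tendsto_card hε hc (one_le_pow₀ one_le_two)
    (fun n => hcov (F n) (hF.1 n)) ?_
  exact le_antisymm (h0 ▸ slowEntropyPartRelNat_le_slowEntropyRelNat
    ((measurable_dyadicLabel k).comp measurable_snd)) zero_le

/-- Theorem `RelativeRigidtySufficientCondition`.
Let `(Y, ν, S)` be ergodic, `α` a cocycle on `Y`, and `π : X_α → Y` the first-coordinate
projection of the skew product.  If there is a Følner sequence `(F_n)` for `ℕ` with
`h_slow^{L,(F_n)}(X_α | π) = 0` for `L(n) = log n`, then `α` is a rigid cocycle, i.e.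
`X_α` is a rigid extension of `Y`. -/
theorem zero_log_relative_slow_entropy_implies_rigid_extension
    {Y : Type*} [MeasurableSpace Y] [StandardBorelSpace Y]
    (ν : Measure Y) [IsProbabilityMeasure ν]
    (S : Y ≃ᵐ Y) (hS : MeasurePreserving S ν ν) (hErg : Ergodic (⇑S) ν)
    (α : Y → AutI) (hα : Measurable (skewMap (⇑S) α))
    (F : ℕ → Finset ℕ) (hF : IsFolnerNat F)
    (h0 : slowEntropyRelNat (skewMap (⇑S) α) (fun y => (Measure.dirac y).prod volume) ν
        (fun n => Real.log n) F = 0) :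
    IsRigidCocycle (⇑S) ν α :=
  zero_log_relative_slow_entropy_implies_rigid_extension_general ν S hS α hα F hF h0
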